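/- Let m ≥ 1, 1 < q ≤ r < ∞, 0 < p ≤ 1, and w_a(x) = |x|^a with 0 ≤ a < np/r. Let G ∈ E^q_{2m−1} be such that ∫_{ℝⁿ}[N_{q,2m}(G;x)]^p |x|^a dx < ∞, and set O = {x ∈ ℝⁿ : |x|^{a/p} N_{q,2m}(G; x) > 1}. Then O has finite Lebesgue measure and ∫_{ℝⁿ∖O} [N_{q,2m}(G; x)]^r dx < ∞. -/

import Mathlib

open MeasureTheory ENNReal Filter Topology

noncomputable section

/-- Euclidean space `ℝⁿ`. -/
abbrev En (n : ℕ) : Type := EuclideanSpace ℝ (Fin n)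

/-- The (closed) cube centered at `x` with side length `r`. -/
def cube {n : ℕ} (x : En n) (r : ℝ) : Set (En n) :=
  {y | ∀ i, |y i - x i| ≤ r / 2}

/-- The normalized `L^q` seminorm `|g|_{q,Q} = (|Q|⁻¹ ∫_Q |g|^q)^{1/q}` over a set `Q`. -/
def lqQ {n : ℕ} (q : ℝ) (g : En n → ℝ) (Q : Set (En n)) : ℝ≥0∞ :=
  ((volume Q)⁻¹ * ∫⁻ y in Q, ENNReal.ofReal (|g y| ^ q)) ^ (1 / q)

/-- The Calderón maximal function `η_{q,γ}(g;x) = sup_{r>0} r^{-γ} |g|_{q,Q(x,r)}`. -/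
def eta {n : ℕ} (q γ : ℝ) (g : En n → ℝ) (x : En n) : ℝ≥0∞ :=
  ⨆ (r : ℝ) (_ : 0 < r), ENNReal.ofReal (r ^ (-γ)) * lqQ q g (cube x r)

/-- `P` is (the function given by) a real polynomial on `ℝⁿ` of total degree at most `k`. -/
def IsPolyDegLe {n : ℕ} (k : ℕ) (P : En n → ℝ) : Prop :=
  ∃ p : MvPolynomial (Fin n) ℝ, p.totalDegree ≤ k ∧
    ∀ x : En n, P x = MvPolynomial.eval (fun i => x i) p

/-- `g` belongs locally to `L^q` (on every cube). -/
def MemLqLoc {n : ℕ} (q : ℝ) (g : En n → ℝ) : Prop :=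
  Measurable g ∧ ∀ (x : En n) (r : ℝ), 0 < r →
    ∫⁻ y in cube x r, ENNReal.ofReal (|g y| ^ q) < ⊤

/-- The maximal function `N_{q,γ}(G;x)` of the class `G` of `g` in `E^q_k`. -/
def Nmax {n : ℕ} (q γ : ℝ) (k : ℕ) (g : En n → ℝ) (x : En n) : ℝ≥0∞ :=
  ⨅ P : {P : En n → ℝ // IsPolyDegLe k P}, eta q γ (fun y => g y - P.1 y) x

/-- The seminorm `‖G‖_{q,Q}` of the class `G` of `g` in `E^q_k`. -/
def qnormQ {n : ℕ} (q : ℝ) (k : ℕ) (g : En n → ℝ) (Q : Set (En n)) : ℝ≥0∞ :=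
  ⨅ P : {P : En n → ℝ // IsPolyDegLe k P}, lqQ q (fun y => g y - P.1 y) Q

/-- A weight: nonnegative, locally integrable, positive a.e. -/
def IsWeight {n : ℕ} (w : En n → ℝ) : Prop :=
  Measurable w ∧ (∀ x, 0 ≤ w x) ∧ (∀ᵐ x ∂(volume : Measure (En n)), 0 < w x) ∧
    LocallyIntegrable w volume

/-- `w(Q) = ∫_Q w`. -/
def wInt {n : ℕ} (w : En n → ℝ) (Q : Set (En n)) : ℝ≥0∞ :=
  ∫⁻ y in Q, ENNReal.ofReal (w y)

/-- The Muckenhoupt class `A_s`, `1 < s < ∞`. -/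
def MuckA {n : ℕ} (s : ℝ) (w : En n → ℝ) : Prop :=
  ∃ C : ℝ≥0∞, C < ⊤ ∧ ∀ (x : En n) (r : ℝ), 0 < r →
    ((volume (cube x r))⁻¹ * wInt w (cube x r)) *
      ((volume (cube x r))⁻¹ *
        ∫⁻ y in cube x r, ENNReal.ofReal (w y) ^ (-(1 / (s - 1)))) ^ (s - 1) ≤ C

/-- The class `A_∞ = ∪_{s} A_s`. -/
def MuckAinf {n : ℕ} (w : En n → ℝ) : Prop := ∃ s : ℝ, 1 < s ∧ MuckA s w

/-- The reverse Hölder class `RH_s`. -/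
def RevHolder {n : ℕ} (s : ℝ) (w : En n → ℝ) : Prop :=
  ∃ C : ℝ≥0∞, C < ⊤ ∧ ∀ (x : En n) (r : ℝ), 0 < r →
    ((volume (cube x r))⁻¹ * ∫⁻ y in cube x r, ENNReal.ofReal (w y) ^ s) ^ (1 / s) ≤
      C * ((volume (cube x r))⁻¹ * wInt w (cube x r))

/-- The weighted Calderón–Hardy "norm" `‖G‖ = ‖N_{q,γ}(G;·)‖_{L^p(w)}` of the class of `g`. -/
def chNorm {n : ℕ} (q γ : ℝ) (k : ℕ) (p : ℝ) (w : En n → ℝ) (g : En n → ℝ) : ℝ≥0∞ :=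
  (∫⁻ x, Nmax q γ k g x ^ p * ENNReal.ofReal (w x)) ^ (1 / p)

/-- Directional derivative along the `i`-th coordinate. -/
def dirDeriv {n : ℕ} (i : Fin n) (f : En n → ℝ) : En n → ℝ :=
  fun x => fderiv ℝ f x (EuclideanSpace.single i 1)

/-- Iterated directional derivatives along a list of coordinates. -/
def pderivList {n : ℕ} : List (Fin n) → (En n → ℝ) → En n → ℝ
  | [], f => f
  | i :: L, f => dirDeriv i (pderivList L f)

/-- The partial derivative `∂^β` for a multi-index `β`. -/
def pderivM {n : ℕ} (β : Fin n → ℕ) (f : En n → ℝ) : En n → ℝ :=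
  pderivList ((List.finRange n).flatMap fun i => List.replicate (β i) i) f

/-- The Laplacian. -/
def lap {n : ℕ} (f : En n → ℝ) : En n → ℝ :=
  fun x => ∑ i, dirDeriv i (dirDeriv i f) x

/-- A Schwartz function (as a plain function). -/
def IsSchwartzFn {n : ℕ} (φ : En n → ℝ) : Prop :=
  ContDiff ℝ (⊤ : ℕ∞) φ ∧ ∀ (k : ℕ) (β : Fin n → ℕ), ∃ C : ℝ,
    ∀ x, (1 + ‖x‖) ^ k * |pderivM β φ x| ≤ C

/-- The Schwartz seminorm `p_N(φ) = Σ_{|β| ≤ N} sup_x (1+|x|)^N |∂^β φ(x)|`. -/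
def pSemi {n : ℕ} (N : ℕ) (φ : En n → ℝ) : ℝ≥0∞ :=
  ∑ β : Fin n → Fin (N + 1),
    if (∑ i, (β i : ℕ)) ≤ N then
      ⨆ x : En n, ENNReal.ofReal ((1 + ‖x‖) ^ N * |pderivM (fun i => (β i : ℕ)) φ x|)
    else 0

/-- The grand maximal function of a distribution given by the pairing `u`. -/
def grandMax {n : ℕ} (N : ℕ) (u : (En n → ℝ) → ℝ) (x : En n) : ℝ≥0∞ :=
  ⨆ (t : ℝ) (_ : 0 < t) (φ : En n → ℝ) (_ : IsSchwartzFn φ) (_ : pSemi N φ ≤ 1),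
    ENNReal.ofReal |u fun y => (t ^ n)⁻¹ * φ (t⁻¹ • (x - y))|

/-- The weighted Hardy space "norm" `‖f‖_{H^p(w)} = ‖M_{F_N} f‖_{L^p(w)}`. -/
def hardyNorm {n : ℕ} (N : ℕ) (p : ℝ) (w : En n → ℝ) (u : (En n → ℝ) → ℝ) : ℝ≥0∞ :=
  (∫⁻ x, grandMax N u x ^ p * ENNReal.ofReal (w x)) ^ (1 / p)

/-- The uncentered Hardy–Littlewood maximal operator (ℝ≥0∞-valued version). -/
def maxFnE {n : ℕ} (f : En n → ℝ≥0∞) (x : En n) : ℝ≥0∞ :=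
  ⨆ (z : En n) (r : ℝ) (_ : 0 < r) (_ : x ∈ cube z r),
    (volume (cube z r))⁻¹ * ∫⁻ y in cube z r, f y

/-- The uncentered Hardy–Littlewood maximal operator over cubes. -/
def maxFn {n : ℕ} (f : En n → ℝ) (x : En n) : ℝ≥0∞ :=
  maxFnE (fun y => ENNReal.ofReal |f y|) x

/-- The fundamental solution `Φ` of `Δ^m`. -/
def Phi {n : ℕ} (m : ℕ) (C₁ C₂ : ℝ) (x : En n) : ℝ :=
  if Even n ∧ n ≤ 2 * m then C₁ * ‖x‖ ^ ((2 * (m : ℤ) - (n : ℤ))) * Real.log ‖x‖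
  else C₂ * ‖x‖ ^ ((2 * (m : ℤ) - (n : ℤ)))

/-- The truncated singular integral maximal operator `T*_α`. -/
def Tstar {n : ℕ} (m : ℕ) (C₁ C₂ : ℝ) (α : Fin n → ℕ) (a : En n → ℝ) (x : En n) : ℝ≥0∞ :=
  ⨆ (ε : ℝ) (_ : 0 < ε),
    ENNReal.ofReal |∫ y in {y : En n | ε < dist x y}, pderivM α (Phi m C₁ C₂) (x - y) * a y|

/-- The critical index `q_w` of a weight. -/
def qIndex {n : ℕ} (w : En n → ℝ) : ℝ := sInf {s : ℝ | 1 < s ∧ MuckA s w}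

/-- The set of reverse Hölder exponents of `w`. -/
def rhSet {n : ℕ} (w : En n → ℝ) : Set ℝ := {s : ℝ | 1 < s ∧ RevHolder s w}

/-- The quantity `r_w/(r_w - 1)`, with the convention that it is `1` when `r_w = ∞`. -/
def rwFactor {n : ℕ} (w : En n → ℝ) : ℝ :=
  haveI := Classical.propDecidable (BddAbove (rhSet w))
  if BddAbove (rhSet w) then sSup (rhSet w) / (sSup (rhSet w) - 1) else 1

/-- A `w-(p, p₀, d)` atom supported in the cube `Q(x₀, r)`. -/
def IsAtomOn {n : ℕ} (p p₀ : ℝ) (d : ℤ) (w : En n → ℝ) (x₀ : En n) (r : ℝ)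
    (a : En n → ℝ) : Prop :=
  Measurable a ∧ Function.support a ⊆ cube x₀ r ∧
    (∫⁻ y, ENNReal.ofReal (|a y| ^ p₀)) ^ (1 / p₀) ≤
      volume (cube x₀ r) ^ (1 / p₀) * (wInt w (cube x₀ r)) ^ (-(1 / p)) ∧
    ∀ β : Fin n → ℕ, ((∑ i, β i : ℤ) ≤ d) →
      ∫ y, (∏ i, y i ^ β i) * a y = 0


section AuxGeom

open Set

variable {n : ℕ}

lemma continuous_coordEn (i : Fin n) : Continuous fun x : En n => x i :=
  (EuclideanSpace.proj (𝕜 := ℝ) i).continuous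

/-- The open cube. -/
def ocube (x : En n) (r : ℝ) : Set (En n) := {y | ∀ i, |y i - x i| < r / 2}

lemma isOpen_ocube (x : En n) (r : ℝ) : IsOpen (ocube x r) := by
  have : ocube x r = ⋂ i, (fun y : En n => |y i - x i|) ⁻¹' Iio (r / 2) := by
    ext y; simp [ocube]
  rw [this]
  exact isOpen_iInter_of_finite fun i =>
    (((continuous_coordEn i).sub continuous_const).abs).isOpen_preimage _ isOpen_Iio

lemma ocube_subset_cube (x : En n) (r : ℝ) : ocube x r ⊆ cube x r :=
  fun y hy i => (hy i).le

lemma cube_eq_preimage (x : En n) (r : ℝ) :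
    cube x r = ((MeasurableEquiv.toLp 2 (Fin n → ℝ)).symm) ⁻¹'
      (Set.pi Set.univ fun i => Icc (x i - r / 2) (x i + r / 2)) := by
  ext y
  simp only [cube, mem_setOf_eq, mem_preimage, Set.mem_pi, mem_univ, forall_true_left,
    mem_Icc, true_implies, MeasurableEquiv.coe_toLp_symm, MeasurableEquiv.toLp_symm_apply]
  constructor
  · intro h i
    have := abs_le.1 (h i)
    constructor <;> [linarith [this.1]; linarith [this.2]]
  · intro h i
    rw [abs_le]
    have := h i
    constructor <;> [linarith [this.1]; linarith [this.2]]

lemma measurableSet_cube (x : En n) (r : ℝ) : MeasurableSet (cube x r) := by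
  rw [cube_eq_preimage]
  exact ((MeasurableEquiv.toLp 2 (Fin n → ℝ)).symm).measurable
    (MeasurableSet.univ_pi fun i => measurableSet_Icc)

lemma volume_cube (x : En n) {r : ℝ} (hr : 0 ≤ r) :
    volume (cube x r) = ENNReal.ofReal r ^ n := by
  rw [cube_eq_preimage,
    (EuclideanSpace.volume_preserving_symm_measurableEquiv_toLp (Fin n)).measure_preimage
      (MeasurableSet.univ_pi fun i => measurableSet_Icc).nullMeasurableSet]
  rw [volume_pi_pi]
  have : ∀ i : Fin n, volume (Icc (x i - r / 2) (x i + r / 2)) = ENNReal.ofReal r := by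
    intro i; rw [Real.volume_Icc]; congr 1; ring
  simp only [this, Finset.prod_const, Finset.card_univ, Fintype.card_fin]

lemma volume_slice (i : Fin n) (c : ℝ) : volume {y : En n | y i = c} = 0 := by
  have hpre : {y : En n | y i = c} =
      ((MeasurableEquiv.toLp 2 (Fin n → ℝ)).symm) ⁻¹' {f : Fin n → ℝ | f i = c} := rfl
  have hmeas : MeasurableSet {f : Fin n → ℝ | f i = c} := by
    have : {f : Fin n → ℝ | f i = c} = (fun f : Fin n → ℝ => f i) ⁻¹' {c} := rfl
    rw [this]; exact (measurable_pi_apply i) (measurableSet_singleton c)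
  rw [hpre, (EuclideanSpace.volume_preserving_symm_measurableEquiv_toLp (Fin n)).measure_preimage
      hmeas.nullMeasurableSet]
  classical
  have hsub : {f : Fin n → ℝ | f i = c} ⊆
      ⋃ R : ℕ, Set.pi Set.univ (fun j => if j = i then {c} else Icc (-(R : ℝ)) R) := by
    intro f hf
    obtain ⟨R, hR⟩ := exists_nat_ge (Finset.univ.sup' ⟨i, Finset.mem_univ i⟩ fun j => |f j|)
    refine mem_iUnion.2 ⟨R, ?_⟩
    intro j _
    by_cases hj : j = i
    · subst hj; simpa using hf
    · simp only [hj, if_false, mem_Icc]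
      have : |f j| ≤ (R : ℝ) :=
        le_trans (Finset.le_sup' (fun j => |f j|) (Finset.mem_univ j)) hR
      exact abs_le.1 this
  refine measure_mono_null hsub (measure_iUnion_null fun R => ?_)
  rw [volume_pi_pi]
  refine Finset.prod_eq_zero (Finset.mem_univ i) ?_
  simp

lemma cube_diff_ocube_null (x : En n) (r : ℝ) : volume (cube x r \ ocube x r) = 0 := by
  have hsub : cube x r \ ocube x r ⊆
      ⋃ i : Fin n, ({y : En n | y i = x i - r / 2} ∪ {y : En n | y i = x i + r / 2}) := by
    rintro y ⟨h1, h2⟩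
    simp only [ocube, mem_setOf_eq, not_forall, not_lt] at h2
    obtain ⟨i, hi⟩ := h2
    have h3 : |y i - x i| = r / 2 := le_antisymm (h1 i) hi
    refine mem_iUnion.2 ⟨i, ?_⟩
    rcases (abs_eq (h3 ▸ abs_nonneg _)).1 h3 with h | h
    · right; simp only [mem_setOf_eq]; linarith
    · left; simp only [mem_setOf_eq]; linarith
  exact measure_mono_null hsub (measure_iUnion_null fun i =>
    measure_union_null (volume_slice i _) (volume_slice i _))

lemma restrict_cube_eq_ocube (x : En n) (r : ℝ) :
    volume.restrict (cube x r) = volume.restrict (ocube x r) := by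
  refine Measure.restrict_congr_set ?_
  rw [MeasureTheory.ae_eq_set]
  constructor
  · exact cube_diff_ocube_null x r
  · rw [Set.diff_eq_empty.2 (ocube_subset_cube x r)]; exact measure_empty

end AuxGeom


section AuxPoly

open Set MvPolynomial

variable {n : ℕ}

/-- Index type for coefficients of polynomials of total degree at most `k`. -/
abbrev CoefIdx (n k : ℕ) : Type := {β : Fin n → Fin (k + 1) // ∑ i, (β i : ℕ) ≤ k}

def expOf {k : ℕ} (β : CoefIdx n k) : Fin n →₀ ℕ :=
  Finsupp.equivFunOnFinite.symm fun i => (β.1 i : ℕ)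

@[simp] lemma expOf_apply {k : ℕ} (β : CoefIdx n k) (i : Fin n) : expOf β i = (β.1 i : ℕ) := rfl

lemma expOf_injective {k : ℕ} : Function.Injective (expOf (n := n) (k := k)) := by
  intro β γ h
  refine Subtype.ext (funext fun i => Fin.ext ?_)
  exact DFunLike.congr_fun h i

/-- The polynomial function with coefficients `c`. -/
def polyOf (k : ℕ) (c : CoefIdx n k → ℝ) : En n → ℝ :=
  fun y => ∑ β : CoefIdx n k, c β * ∏ i, y i ^ (β.1 i : ℕ)

lemma continuous_polyOf_coef (k : ℕ) (y : En n) :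
    Continuous fun c : CoefIdx n k → ℝ => polyOf k c y :=
  continuous_finset_sum _ fun β _ => (continuous_apply β).mul continuous_const

lemma continuous_polyOf (k : ℕ) (c : CoefIdx n k → ℝ) : Continuous (polyOf k c) :=
  continuous_finset_sum _ fun β _ => continuous_const.mul
    (continuous_finset_prod _ fun i _ => (continuous_coordEn i).pow _)

lemma isPolyDegLe_polyOf (k : ℕ) (c : CoefIdx n k → ℝ) : IsPolyDegLe k (polyOf k c) := by
  classical
  refine ⟨∑ β : CoefIdx n k, monomial (expOf β) (c β), ?_, ?_⟩
  · refine le_trans (totalDegree_finset_sum _ _) (Finset.sup_le fun β _ => ?_)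
    refine le_trans (totalDegree_monomial_le _ _) ?_
    rw [Finsupp.sum_fintype _ _ fun i => rfl]
    simpa using β.2
  · intro x
    rw [map_sum]
    refine Finset.sum_congr rfl fun β _ => ?_
    rw [eval_monomial]
    congr 1
    rw [Finsupp.prod_fintype _ _ fun i => pow_zero _]
    rfl

lemma exists_polyOf {k : ℕ} {P : En n → ℝ} (h : IsPolyDegLe k P) :
    ∃ c : CoefIdx n k → ℝ, ∀ y, P y = polyOf k c y := by
  classical
  obtain ⟨p, hdeg, hval⟩ := h
  have hsupp : p.support ⊆ Finset.univ.image (fun β : CoefIdx n k => expOf β) := by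
    intro d hd
    have hsum : ∑ i, d i ≤ k := by
      have h1 : (d.sum fun _ e => e) ≤ p.totalDegree := le_totalDegree hd
      rw [Finsupp.sum_fintype _ _ fun i => rfl] at h1
      exact le_trans h1 hdeg
    have hlt : ∀ i, d i < k + 1 := fun i =>
      Nat.lt_succ_of_le (le_trans
        (Finset.single_le_sum (fun j _ => Nat.zero_le _) (Finset.mem_univ i)) hsum)
    refine Finset.mem_image.2 ⟨⟨fun i => ⟨d i, hlt i⟩, ?_⟩, Finset.mem_univ _, ?_⟩
    · simpa using hsum
    · ext i; simp [expOf]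
  refine ⟨fun β => coeff (expOf β) p, fun y => ?_⟩
  rw [hval y, eval_eq']
  have h2 : polyOf k (fun β => coeff (expOf β) p) y =
      ∑ d ∈ Finset.univ.image (fun β : CoefIdx n k => expOf β),
        coeff d p * ∏ i, y i ^ d i := by
    rw [Finset.sum_image (fun β _ γ _ h => expOf_injective h)]
    rfl
  rw [h2]
  exact Finset.sum_subset hsupp fun d _ hd => by
    rw [MvPolynomial.notMem_support_iff.1 hd, zero_mul]

lemma Nmax_eq_iInf_coef (q γ : ℝ) (k : ℕ) (g : En n → ℝ) (x : En n) :
    Nmax q γ k g x = ⨅ c : CoefIdx n k → ℝ, eta q γ (fun y => g y - polyOf k c y) x := by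
  apply le_antisymm
  · exact le_iInf fun c => iInf_le _ (⟨polyOf k c, isPolyDegLe_polyOf k c⟩ :
      {P : En n → ℝ // IsPolyDegLe k P})
  · refine le_iInf fun P => ?_
    obtain ⟨c, hc⟩ := exists_polyOf P.2
    have heq : (fun y => g y - P.1 y) = fun y => g y - polyOf k c y :=
      funext fun y => by rw [hc y]
    rw [heq]
    exact iInf_le _ c

end AuxPoly


section AuxLSC

open Set

variable {n : ℕ} (q γ : ℝ) (k : ℕ) (g : En n → ℝ)

def Jfun (r : ℝ) (z : (CoefIdx n k → ℝ) × En n) : ℝ≥0∞ :=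
  ∫⁻ y in cube z.2 r, ENNReal.ofReal (|g y - polyOf k z.1 y| ^ q)

def Hfun (z : (CoefIdx n k → ℝ) × En n) : ℝ≥0∞ :=
  eta q γ (fun y => g y - polyOf k z.1 y) z.2

lemma measurable_integrand (hg : Measurable g) (c : CoefIdx n k → ℝ) :
    Measurable fun y => ENNReal.ofReal (|g y - polyOf k c y| ^ q) :=
  ENNReal.measurable_ofReal.comp
    (((hg.sub (continuous_polyOf k c).measurable).abs).pow measurable_const)

lemma lsc_Jfun (hg : Measurable g) (hq : 0 ≤ q) (r : ℝ) :
    LowerSemicontinuous (Jfun q k g r) := by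
  intro z b hb
  by_contra hcon
  rw [Filter.not_eventually] at hcon
  have hcon' : ∃ᶠ z' in 𝓝 z, Jfun q k g r z' ≤ b := hcon.mono fun z' h => not_lt.1 h
  obtain ⟨u, hut, hu⟩ := Filter.exists_seq_forall_of_frequently hcon'
  have hc1 : Filter.Tendsto (fun j => (u j).1) atTop (𝓝 z.1) :=
    (continuous_fst.tendsto z).comp hut
  have hc2 : Filter.Tendsto (fun j => (u j).2) atTop (𝓝 z.2) :=
    (continuous_snd.tendsto z).comp hut
  set f : En n → ℝ≥0∞ := fun y => ENNReal.ofReal (|g y - polyOf k z.1 y| ^ q) with hf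
  set F : ℕ → En n → ℝ≥0∞ := fun j y =>
    (cube (u j).2 r).indicator
      (fun y' => ENNReal.ofReal (|g y' - polyOf k (u j).1 y'| ^ q)) y with hF
  have key : Jfun q k g r z ≤ b := by
    have step1 : Jfun q k g r z = ∫⁻ y, (ocube z.2 r).indicator f y := by
      rw [show Jfun q k g r z = ∫⁻ y in cube z.2 r, f y from rfl,
        restrict_cube_eq_ocube, ← lintegral_indicator (isOpen_ocube _ _).measurableSet]
    have step2 : ∀ y, (ocube z.2 r).indicator f y ≤ Filter.liminf (fun j => F j y) atTop := by
      intro y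
      by_cases hy : y ∈ ocube z.2 r
      · rw [Set.indicator_of_mem hy]
        have hcont : Continuous fun c : CoefIdx n k → ℝ =>
            ENNReal.ofReal (|g y - polyOf k c y| ^ q) := by
          refine ENNReal.continuous_ofReal.comp ?_
          refine Continuous.rpow_const ?_ fun c => Or.inr hq
          exact (continuous_const.sub (continuous_polyOf_coef k y)).abs
        have h1 : Filter.Tendsto (fun j => ENNReal.ofReal (|g y - polyOf k (u j).1 y| ^ q))
            atTop (𝓝 (f y)) := (hcont.tendsto z.1).comp hc1
        have hmem : ∀ᶠ j in atTop, y ∈ cube (u j).2 r := by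
          have hev : ∀ i : Fin n, ∀ᶠ j in atTop, |y i - (u j).2 i| ≤ r / 2 := by
            intro i
            have htd : Filter.Tendsto (fun j => |y i - (u j).2 i|) atTop
                (𝓝 (|y i - z.2 i|)) :=
              (((continuous_const.sub (continuous_coordEn i)).abs).tendsto z.2).comp hc2
            exact (htd.eventually_lt_const (hy i)).mono fun j hj => hj.le
          refine (eventually_all.2 hev).mono fun j hj => hj
        have h2 : ∀ᶠ j in atTop,
            F j y = ENNReal.ofReal (|g y - polyOf k (u j).1 y| ^ q) :=
          hmem.mono fun j hj => Set.indicator_of_mem hj _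
        refine le_of_eq ?_
        rw [Filter.liminf_congr h2]
        exact h1.liminf_eq.symm
      · rw [Set.indicator_of_notMem hy]; exact zero_le
    have step3 : ∫⁻ y, (ocube z.2 r).indicator f y ≤
        Filter.liminf (fun j => ∫⁻ y, F j y) atTop :=
      le_trans (lintegral_mono step2) (lintegral_liminf_le fun j =>
        (measurable_integrand q k g hg _).indicator (measurableSet_cube _ _))
    have step4 : Filter.liminf (fun j => ∫⁻ y, F j y) atTop ≤ b := by
      refine Filter.liminf_le_of_frequently_le' ?_
      refine (Filter.Eventually.of_forall fun j => ?_).frequently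
      rw [show (∫⁻ y, F j y) = ∫⁻ y, (cube (u j).2 r).indicator
          (fun y' => ENNReal.ofReal (|g y' - polyOf k (u j).1 y'| ^ q)) y from rfl,
        lintegral_indicator (measurableSet_cube _ _)]
      exact hu j
    rw [step1]; exact le_trans step3 step4
  exact absurd key (not_le.2 hb)

lemma Hfun_eq (z : (CoefIdx n k → ℝ) × En n) :
    Hfun q γ k g z = ⨆ (r : ℝ) (_ : 0 < r),
      ENNReal.ofReal (r ^ (-γ)) * ((ENNReal.ofReal r ^ n)⁻¹ * Jfun q k g r z) ^ (1 / q) := by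
  rw [Hfun, eta]
  refine iSup_congr fun r => iSup_congr fun hr => ?_
  rw [lqQ, volume_cube _ hr.le]
  rfl

lemma lsc_Hfun (hg : Measurable g) (hq : 0 ≤ q) : LowerSemicontinuous (Hfun q γ k g) := by
  have hrw : Hfun q γ k g = fun z => ⨆ (r : ℝ) (_ : 0 < r),
      ENNReal.ofReal (r ^ (-γ)) * ((ENNReal.ofReal r ^ n)⁻¹ * Jfun q k g r z) ^ (1 / q) :=
    funext fun z => Hfun_eq q γ k g z
  rw [hrw]
  refine lowerSemicontinuous_iSup fun r => lowerSemicontinuous_iSup fun hr => ?_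
  have hc1 : ((ENNReal.ofReal r ^ n)⁻¹ : ℝ≥0∞) ≠ ⊤ := by
    rw [Ne, ENNReal.inv_eq_top]
    exact pow_ne_zero n (ENNReal.ofReal_pos.2 hr).ne'
  have hφ : Continuous fun t : ℝ≥0∞ =>
      ENNReal.ofReal (r ^ (-γ)) * ((ENNReal.ofReal r ^ n)⁻¹ * t) ^ (1 / q) :=
    (ENNReal.continuous_const_mul ENNReal.ofReal_ne_top).comp
      (ENNReal.continuous_rpow_const.comp (ENNReal.continuous_const_mul hc1))
  have hmono : Monotone fun t : ℝ≥0∞ =>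
      ENNReal.ofReal (r ^ (-γ)) * ((ENNReal.ofReal r ^ n)⁻¹ * t) ^ (1 / q) := fun s t hst =>
    mul_le_mul_right (ENNReal.rpow_le_rpow (mul_le_mul_right hst _)
      (div_nonneg zero_le_one hq)) _
  exact hφ.comp_lowerSemicontinuous (lsc_Jfun q k g hg hq r) hmono

end AuxLSC


section AuxMeasurable

open Set

lemma isClosed_proj_snd {X Y : Type*} [TopologicalSpace X] [TopologicalSpace Y]
    {B : Set X} (hB : IsCompact B) {F : Set (X × Y)} (hF : IsClosed F) :
    IsClosed (Prod.snd '' (F ∩ B ×ˢ (univ : Set Y))) := by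
  have hrw : Prod.snd '' (F ∩ B ×ˢ (univ : Set Y)) =
      Prod.snd '' ((fun p : B × Y => ((p.1 : X), p.2)) ⁻¹' F) := by
    ext y
    constructor
    · rintro ⟨⟨x, y'⟩, ⟨hf, hb, -⟩, rfl⟩
      exact ⟨(⟨x, hb⟩, y'), hf, rfl⟩
    · rintro ⟨⟨b, y'⟩, hf, rfl⟩
      exact ⟨((b : X), y'), ⟨hf, b.2, trivial⟩, rfl⟩
  rw [hrw]
  haveI : CompactSpace B := isCompact_iff_compactSpace.mp hB
  exact isClosedMap_snd_of_compactSpace _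
    (hF.preimage ((continuous_subtype_val.comp continuous_fst).prodMk continuous_snd))

lemma exists_ofReal_rat_btwn {u t : ℝ≥0∞} (h : u < t) :
    ∃ s : ℚ, u ≤ ENNReal.ofReal s ∧ ENNReal.ofReal s < t := by
  rcases eq_or_ne t ⊤ with rfl | ht
  · obtain ⟨s, hs⟩ := exists_rat_gt u.toReal
    exact ⟨s, by rw [← ENNReal.ofReal_toReal h.ne]; exact ENNReal.ofReal_le_ofReal hs.le,
      ENNReal.ofReal_lt_top⟩
  · obtain ⟨s, hs1, hs2⟩ := exists_rat_btwn (ENNReal.toReal_strict_mono ht h)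
    have hu : u ≠ ⊤ := (h.trans_le le_top).ne
    refine ⟨s, ?_, ?_⟩
    · rw [← ENNReal.ofReal_toReal hu]
      exact ENNReal.ofReal_le_ofReal hs1.le
    · rw [← ENNReal.ofReal_toReal ht]
      exact (ENNReal.ofReal_lt_ofReal_iff (lt_trans (lt_of_le_of_lt ENNReal.toReal_nonneg hs1)
        hs2)).2 hs2

lemma measurable_Nmax {n : ℕ} (q γ : ℝ) (k : ℕ) {g : En n → ℝ}
    (hg : Measurable g) (hq : 0 ≤ q) : Measurable (Nmax q γ k g) := by
  classical
  have hH := lsc_Hfun q γ k g hg hq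
  have hA : ∀ t : ℝ≥0∞, MeasurableSet {x : En n | ∃ c, Hfun q γ k g (c, x) ≤ t} := by
    intro t
    have hrw : {x : En n | ∃ c, Hfun q γ k g (c, x) ≤ t} =
        ⋃ j : ℕ, Prod.snd '' ({z : (CoefIdx n k → ℝ) × En n | Hfun q γ k g z ≤ t} ∩
          (Set.pi Set.univ fun _ : CoefIdx n k => Icc (-(j : ℝ)) (j : ℝ)) ×ˢ univ) := by
      ext x
      simp only [mem_setOf_eq, mem_iUnion]
      constructor
      · rintro ⟨c, hc⟩
        set M : ℕ := Finset.univ.sup fun β : CoefIdx n k => ⌈|c β|⌉₊ with hM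
        have hbound : ∀ β : CoefIdx n k, |c β| ≤ (M : ℝ) := by
          intro β
          refine le_trans (Nat.le_ceil _) ?_
          have h1 : (⌈|c β|⌉₊ : ℕ) ≤ M :=
            Finset.le_sup (f := fun β : CoefIdx n k => ⌈|c β|⌉₊) (Finset.mem_univ β)
          exact_mod_cast h1
        refine ⟨M, (c, x), ⟨hc, ?_, trivial⟩, rfl⟩
        intro β _
        rw [mem_Icc]
        have := abs_le.1 (hbound β)
        exact ⟨this.1, this.2⟩
      · rintro ⟨j, ⟨⟨c, x'⟩, ⟨hz, -⟩, rfl⟩⟩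
        exact ⟨c, hz⟩
    rw [hrw]
    refine MeasurableSet.iUnion fun j => ?_
    exact (isClosed_proj_snd (isCompact_univ_pi fun _ => isCompact_Icc)
      (hH.isClosed_preimage t)).measurableSet
  have key : ∀ t : ℝ≥0∞, MeasurableSet {x : En n | Nmax q γ k g x < t} := by
    intro t
    have hrw : {x : En n | Nmax q γ k g x < t} =
        ⋃ s : ℚ, ({x : En n | ENNReal.ofReal s < t} ∩
          {x : En n | ∃ c, Hfun q γ k g (c, x) ≤ ENNReal.ofReal s}) := by
      ext x
      simp only [mem_setOf_eq, mem_iUnion, mem_inter_iff]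
      rw [Nmax_eq_iInf_coef, iInf_lt_iff]
      constructor
      · rintro ⟨c, hc⟩
        obtain ⟨s, hs1, hs2⟩ := exists_ofReal_rat_btwn hc
        exact ⟨s, hs2, c, hs1⟩
      · rintro ⟨s, hst, c, hcs⟩
        exact ⟨c, lt_of_le_of_lt hcs hst⟩
    rw [hrw]
    refine MeasurableSet.iUnion fun s => ?_
    refine MeasurableSet.inter ?_ (hA _)
    by_cases h : ENNReal.ofReal s < t
    · simp only [h, setOf_true]; exact MeasurableSet.univ
    · simp only [h, setOf_false]; exact MeasurableSet.empty
  exact measurable_of_Iio fun t => key t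

end AuxMeasurable


section AuxIntegr

open Set Metric

lemma lintegral_ball_rpow_neg_lt_top {n : ℕ} (hn : 1 ≤ n) {s : ℝ} (hs0 : 0 ≤ s)
    (hsn : s < n) :
    ∫⁻ x : En n in ball (0 : En n) 1, ENNReal.ofReal (‖x‖ ^ (-s)) < ⊤ := by
  rcases eq_or_lt_of_le hs0 with h0 | hs0
  · rw [← h0]
    simp only [neg_zero, Real.rpow_zero, ENNReal.ofReal_one]
    rw [setLIntegral_one]
    exact measure_ball_lt_top
  · set μ := volume.restrict (ball (0 : En n) 1) with hμ
    have hmeas : Measurable fun x : En n => ‖x‖ ^ (-s) :=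
      measurable_norm.pow measurable_const
    have hnn : 0 ≤ᵐ[μ] fun x : En n => ‖x‖ ^ (-s) :=
      Filter.Eventually.of_forall fun x => Real.rpow_nonneg (norm_nonneg _) _
    rw [show ∫⁻ x : En n in ball (0 : En n) 1, ENNReal.ofReal (‖x‖ ^ (-s)) =
      ∫⁻ x, ENNReal.ofReal (‖x‖ ^ (-s)) ∂μ from rfl]
    rw [lintegral_eq_lintegral_meas_le μ hnn hmeas.aemeasurable]
    have hsplit : ∫⁻ t in Ioi (0 : ℝ), μ {a : En n | t ≤ ‖a‖ ^ (-s)} ≤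
        (∫⁻ t in Ioc (0 : ℝ) 1, μ {a : En n | t ≤ ‖a‖ ^ (-s)}) +
          ∫⁻ t in Ioi (1 : ℝ), μ {a : En n | t ≤ ‖a‖ ^ (-s)} :=
      le_trans (lintegral_mono_set Ioi_subset_Ioc_union_Ioi) (lintegral_union_le _ _ _)
    refine lt_of_le_of_lt hsplit (ENNReal.add_lt_top.2 ⟨?_, ?_⟩)
    · refine lt_of_le_of_lt (setLIntegral_mono' measurableSet_Ioc fun t _ =>
        le_trans (measure_mono (subset_univ _))
          (le_of_eq (Measure.restrict_apply_univ _))) ?_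
      rw [setLIntegral_const, Real.volume_Ioc]
      refine ENNReal.mul_lt_top measure_ball_lt_top ?_
      simp [ENNReal.ofReal_lt_top]
    · have hbd : ∀ t ∈ Ioi (1 : ℝ), μ {a : En n | t ≤ ‖a‖ ^ (-s)} ≤
          ENNReal.ofReal (t ^ ((-s)⁻¹ * n)) * volume (ball (0 : En n) 1) := by
        intro t ht
        have ht1 : (1 : ℝ) < t := ht
        have htpos : (0 : ℝ) < t := lt_trans zero_lt_one ht1
        have hsub : {a : En n | t ≤ ‖a‖ ^ (-s)} ⊆ closedBall (0 : En n) (t ^ (-s)⁻¹) := by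
          intro a ha
          rw [mem_setOf_eq] at ha
          rcases eq_or_ne a 0 with rfl | ha0
          · exfalso
            rw [norm_zero, Real.zero_rpow (neg_ne_zero.2 hs0.ne')] at ha
            linarith
          · have hna : 0 < ‖a‖ := norm_pos_iff.2 ha0
            rw [mem_closedBall_zero_iff]
            exact (Real.le_rpow_inv_iff_of_neg hna htpos (neg_lt_zero.2 hs0)).2 ha
        calc μ {a : En n | t ≤ ‖a‖ ^ (-s)}
            ≤ volume {a : En n | t ≤ ‖a‖ ^ (-s)} :=
              Measure.le_iff'.1 Measure.restrict_le_self _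
          _ ≤ volume (closedBall (0 : En n) (t ^ (-s)⁻¹)) := measure_mono hsub
          _ = ENNReal.ofReal ((t ^ (-s)⁻¹) ^ Module.finrank ℝ (En n)) *
                volume (ball (0 : En n) 1) :=
              Measure.addHaar_closedBall _ _ (Real.rpow_nonneg htpos.le _)
          _ = ENNReal.ofReal (t ^ ((-s)⁻¹ * n)) * volume (ball (0 : En n) 1) := by
              rw [finrank_euclideanSpace_fin, ← Real.rpow_natCast (t ^ (-s)⁻¹) n,
                ← Real.rpow_mul htpos.le]
      refine lt_of_le_of_lt (setLIntegral_mono' measurableSet_Ioi hbd) ?_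
      rw [lintegral_mul_const' _ _ measure_ball_lt_top.ne]
      refine ENNReal.mul_lt_top ?_ measure_ball_lt_top
      refine IntegrableOn.setLIntegral_lt_top ?_
      refine integrableOn_Ioi_rpow_of_lt ?_ zero_lt_one
      rw [inv_neg, neg_mul, neg_lt_neg_iff, inv_mul_eq_div]
      exact (one_lt_div hs0).2 hsn

end AuxIntegr


/-- If `0 ≤ a < np/r` and `G ∈ 𝓗^p_{q,2m}(ℝⁿ, |x|^a)`, then
`O = {x : |x|^{a/p} N_{q,2m}(G;x) > 1}` has finite measure and
`∫_{ℝⁿ∖O} [N_{q,2m}(G;x)]^r dx < ∞`. -/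
theorem Nmax_rIntegrable_off_exceptional_set
    (n m : ℕ) (hn : 1 ≤ n) (hm : 1 ≤ m) (q r p a : ℝ)
    (hq : 1 < q) (hqr : q ≤ r) (hp0 : 0 < p) (hp1 : p ≤ 1)
    (ha0 : 0 ≤ a) (ha1 : a < n * p / r)
    (g : En n → ℝ) (hg : MemLqLoc q g)
    (hfin : ∫⁻ x, Nmax q (2 * m) (2 * m - 1) g x ^ p * ENNReal.ofReal (‖x‖ ^ a) < ⊤) :
    volume {x : En n |
        1 < ENNReal.ofReal (‖x‖ ^ (a / p)) * Nmax q (2 * m) (2 * m - 1) g x} < ⊤ ∧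
    ∫⁻ x in {x : En n |
        1 < ENNReal.ofReal (‖x‖ ^ (a / p)) * Nmax q (2 * m) (2 * m - 1) g x}ᶜ,
      Nmax q (2 * m) (2 * m - 1) g x ^ r < ⊤ := by
  classical
  have hq0 : (0 : ℝ) < q := lt_trans zero_lt_one hq
  have hr0 : (0 : ℝ) < r := lt_of_lt_of_le hq0 hqr
  have hpr : p ≤ r := le_trans hp1 (le_trans hq.le hqr)
  set N : En n → ℝ≥0∞ := Nmax q (2 * m) (2 * m - 1) g with hNdef
  have hNmeas : Measurable N := measurable_Nmax _ _ _ hg.1 hq0.le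
  have hwmeas : Measurable fun x : En n => ENNReal.ofReal (‖x‖ ^ (a / p)) :=
    (measurable_norm.pow measurable_const).ennreal_ofReal
  set O : Set (En n) := {x : En n | 1 < ENNReal.ofReal (‖x‖ ^ (a / p)) * N x} with hOdef
  have hOmeas : MeasurableSet O := measurableSet_lt measurable_const (hwmeas.mul hNmeas)
  have hptO : ∀ x ∈ O, (1 : ℝ≥0∞) ≤ N x ^ p * ENNReal.ofReal (‖x‖ ^ a) := by
    intro x hx
    have hx' : (1 : ℝ≥0∞) < ENNReal.ofReal (‖x‖ ^ (a / p)) * N x := hx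
    have h1 : (1 : ℝ≥0∞) ≤ (ENNReal.ofReal (‖x‖ ^ (a / p)) * N x) ^ p := by
      rw [← ENNReal.one_rpow p]
      exact ENNReal.rpow_le_rpow hx'.le hp0.le
    have h2 : (ENNReal.ofReal (‖x‖ ^ (a / p)) * N x) ^ p
        = N x ^ p * ENNReal.ofReal (‖x‖ ^ a) := by
      rw [ENNReal.mul_rpow_of_nonneg _ _ hp0.le,
        ENNReal.ofReal_rpow_of_nonneg (Real.rpow_nonneg (norm_nonneg x) _) hp0.le,
        ← Real.rpow_mul (norm_nonneg x), div_mul_cancel₀ a hp0.ne', mul_comm]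
    rw [h2] at h1
    exact h1
  have part1 : volume O < ⊤ := by
    have hle : volume O ≤ ∫⁻ x, N x ^ p * ENNReal.ofReal (‖x‖ ^ a) := by
      rw [← setLIntegral_one O]
      exact le_trans (setLIntegral_mono' hOmeas hptO) (setLIntegral_le_lintegral _ _)
    exact lt_of_le_of_lt hle hfin
  refine ⟨part1, ?_⟩
  set B : En n → ℝ≥0∞ := fun x =>
    (Metric.ball (0 : En n) 1).indicator
      (fun x => ENNReal.ofReal (‖x‖ ^ (-(a * r / p)))) x +
      N x ^ p * ENNReal.ofReal (‖x‖ ^ a) with hBdef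
  have hBmeas : Measurable B := by
    refine Measurable.add ?_ (((ENNReal.continuous_rpow_const.measurable).comp hNmeas).mul
      ((measurable_norm.pow measurable_const).ennreal_ofReal))
    exact ((measurable_norm.pow measurable_const).ennreal_ofReal).indicator
      measurableSet_ball
  have hpt : ∀ x : En n, x ≠ 0 → x ∈ Oᶜ → N x ^ r ≤ B x := by
    intro x hx0 hxO
    have ht : ENNReal.ofReal (‖x‖ ^ (a / p)) * N x ≤ 1 := not_lt.1 hxO
    have hxpos : 0 < ‖x‖ := norm_pos_iff.2 hx0
    by_cases hx1 : ‖x‖ < 1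
    · have hbpos : 0 < ‖x‖ ^ (a / p) := Real.rpow_pos_of_pos hxpos _
      have hNle : N x ≤ (ENNReal.ofReal (‖x‖ ^ (a / p)))⁻¹ := by
        rw [ENNReal.le_inv_iff_mul_le, mul_comm]
        exact ht
      have hkey : N x ^ r ≤ ENNReal.ofReal (‖x‖ ^ (-(a * r / p))) := by
        refine le_trans (ENNReal.rpow_le_rpow hNle hr0.le) (le_of_eq ?_)
        rw [← ENNReal.ofReal_inv_of_pos hbpos, ← Real.rpow_neg (norm_nonneg x),
          ENNReal.ofReal_rpow_of_nonneg (Real.rpow_nonneg (norm_nonneg x) _) hr0.le,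
          ← Real.rpow_mul (norm_nonneg x)]
        congr 1
        ring_nf
      refine le_trans hkey ?_
      have hmem : x ∈ Metric.ball (0 : En n) 1 := mem_ball_zero_iff.2 hx1
      calc ENNReal.ofReal (‖x‖ ^ (-(a * r / p)))
          = (Metric.ball (0 : En n) 1).indicator
              (fun x => ENNReal.ofReal (‖x‖ ^ (-(a * r / p)))) x :=
            (Set.indicator_of_mem hmem (fun x : En n => ENNReal.ofReal (‖x‖ ^ (-(a * r / p))))).symm
        _ ≤ B x := le_self_add
    · push_neg at hx1
      have hb1 : (1 : ℝ≥0∞) ≤ ENNReal.ofReal (‖x‖ ^ (a / p)) := by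
        rw [← ENNReal.ofReal_one]
        exact ENNReal.ofReal_le_ofReal (Real.one_le_rpow hx1 (div_nonneg ha0 hp0.le))
      have hN1 : N x ≤ 1 :=
        le_trans (le_mul_of_one_le_left zero_le hb1) ht
      have ha1' : (1 : ℝ≥0∞) ≤ ENNReal.ofReal (‖x‖ ^ a) := by
        rw [← ENNReal.ofReal_one]
        exact ENNReal.ofReal_le_ofReal (Real.one_le_rpow hx1 ha0)
      calc N x ^ r ≤ N x ^ p := ENNReal.rpow_le_rpow_of_exponent_ge hN1 hpr
        _ ≤ N x ^ p * ENNReal.ofReal (‖x‖ ^ a) := le_mul_of_one_le_right zero_le ha1'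
        _ ≤ B x := le_add_self
  have hae : ∀ᵐ x, x ∈ Oᶜ → N x ^ r ≤ B x := by
    have h0 : volume ({0} : Set (En n)) = 0 := by
      refine measure_mono_null ?_ (volume_slice (⟨0, hn⟩ : Fin n) 0)
      intro y hy
      rw [Set.mem_singleton_iff] at hy
      subst hy
      simp [Set.mem_setOf_eq]
    rw [ae_iff]
    refine measure_mono_null ?_ h0
    intro x hx
    rw [Set.mem_setOf_eq, Classical.not_imp] at hx
    rw [Set.mem_singleton_iff]
    by_contra hx0
    exact hx.2 (hpt x hx0 hx.1)
  have part2le : ∫⁻ x in Oᶜ, N x ^ r ≤ ∫⁻ x, B x :=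
    le_trans (setLIntegral_mono_ae hBmeas.aemeasurable hae) (setLIntegral_le_lintegral _ _)
  have hfinB : ∫⁻ x, B x < ⊤ := by
    rw [hBdef]
    rw [lintegral_add_left (((measurable_norm.pow measurable_const).ennreal_ofReal).indicator
      measurableSet_ball)]
    refine ENNReal.add_lt_top.2 ⟨?_, hfin⟩
    rw [lintegral_indicator measurableSet_ball]
    refine lintegral_ball_rpow_neg_lt_top hn (by positivity) ?_
    rw [div_lt_iff₀ hp0]
    rw [lt_div_iff₀ hr0] at ha1
    linarith
  exact lt_of_le_of_lt part2le hfinB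


end
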